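/- For all real s > 1, ∫_s^∞ Q(√γ) dγ ≥ e^{-s/2}/√(2πs). -/

import Mathlib

open MeasureTheory Real

/-- The standard Gaussian tail function `Q(t) = ∫_t^∞ (1/√(2π)) e^{-u²/2} du`. -/
noncomputable def gaussQ (t : ℝ) : ℝ :=
  ∫ u in Set.Ioi t, (1 / Real.sqrt (2 * π)) * Real.exp (-u ^ 2 / 2)

/-!
With `φ` the standard normal density, `F(t) = t φ(t) + (1 - t²) Q(t)` satisfies `F' = -2t Q` and
`F(t) → 0`, so `∫_s^∞ Q(√γ) dγ = F(√s)`. For `t ≥ 1` the factor `1 - t²` is nonpositive, so Mills'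
inequality `Q(t) ≤ φ(t)/t` gives `F(t) ≥ φ(t)/t`, which at `t = √s` is the claimed bound.
-/

open Filter Set Topology

noncomputable def gaussDensity (u : ℝ) : ℝ := 1 / √(2 * π) * exp (-u ^ 2 / 2)

lemma gaussDensity_nonneg (u : ℝ) : 0 ≤ gaussDensity u := by
  unfold gaussDensity; positivity

lemma continuous_gaussDensity : Continuous gaussDensity := by
  unfold gaussDensity; fun_prop

lemma integrable_gaussDensity : Integrable gaussDensity := by
  have h := (integrable_exp_neg_mul_sq (b := 1 / 2) (by norm_num)).const_mul (1 / √(2 * π))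
  refine h.congr (ae_of_all _ fun u => ?_)
  simp only [gaussDensity]; ring_nf

lemma hasDerivAt_gaussDensity (u : ℝ) : HasDerivAt gaussDensity (-u * gaussDensity u) u := by
  have h := ((((hasDerivAt_pow 2 u).fun_neg).div_const 2).exp).const_mul (1 / √(2 * π))
  exact h.congr_deriv (by simp only [gaussDensity]; push_cast; ring)

lemma tendsto_rpow_mul_gaussDensity_atTop (s : ℝ) :
    Tendsto (fun t => t ^ s * gaussDensity t) atTop (𝓝 0) := by
  have h := ((tendsto_rpow_abs_mul_exp_neg_mul_sq_cocompact (a := 1 / 2) (by norm_num) s).mono_left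
    atTop_le_cocompact).const_mul (1 / √(2 * π))
  rw [mul_zero] at h
  refine h.congr' ?_
  filter_upwards [eventually_ge_atTop 0] with t ht
  simp only [gaussDensity, abs_of_nonneg ht]; ring_nf

lemma gaussQ_eq_integral_gaussDensity (t : ℝ) : gaussQ t = ∫ u in Ioi t, gaussDensity u := rfl

lemma gaussQ_nonneg (t : ℝ) : 0 ≤ gaussQ t :=
  setIntegral_nonneg measurableSet_Ioi fun u _ => gaussDensity_nonneg u

lemma hasDerivAt_gaussQ (t : ℝ) : HasDerivAt gaussQ (-gaussDensity t) t := by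
  have hdiff : ∀ x, gaussQ x = gaussQ t - ∫ u in t..x, gaussDensity u := fun x => by
    rw [← intervalIntegral.integral_Ioi_sub_Ioi' integrable_gaussDensity.integrableOn
      integrable_gaussDensity.integrableOn, gaussQ_eq_integral_gaussDensity,
      gaussQ_eq_integral_gaussDensity, sub_sub_cancel]
  have hint : HasDerivAt (fun x => ∫ u in t..x, gaussDensity u) (gaussDensity t) t :=
    intervalIntegral.integral_hasDerivAt_right integrable_gaussDensity.intervalIntegrable
      (continuous_gaussDensity.stronglyMeasurableAtFilter _ _)
      continuous_gaussDensity.continuousAt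
  rw [funext hdiff, ← zero_sub]
  exact (hasDerivAt_const t _).sub hint

/-- Mills' inequality. -/
lemma gaussQ_le_gaussDensity_div {t : ℝ} (ht : 0 < t) : gaussQ t ≤ gaussDensity t / t := by
  have hderiv : ∀ u ∈ Ici t, HasDerivAt (fun u => -gaussDensity u) (u * gaussDensity u) u :=
    fun u _ => by simpa using (hasDerivAt_gaussDensity u).fun_neg
  have hpos : ∀ u ∈ Ioi t, 0 ≤ u * gaussDensity u :=
    fun u hu => mul_nonneg (ht.trans hu).le (gaussDensity_nonneg u)
  have hlim : Tendsto (fun u => -gaussDensity u) atTop (𝓝 0) := by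
    simpa using (tendsto_rpow_mul_gaussDensity_atTop 0).neg
  have hmoment : ∫ u in Ioi t, u * gaussDensity u = gaussDensity t := by
    rw [integral_Ioi_of_hasDerivAt_of_nonneg' hderiv hpos hlim, zero_sub, neg_neg]
  calc gaussQ t ≤ ∫ u in Ioi t, t⁻¹ * (u * gaussDensity u) := by
        refine setIntegral_mono_on integrable_gaussDensity.integrableOn
          ((integrableOn_Ioi_deriv_of_nonneg' hderiv hpos hlim).const_mul _) measurableSet_Ioi
          fun u hu => ?_
        rw [← mul_assoc]
        exact le_mul_of_one_le_left (gaussDensity_nonneg u)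
          (by rw [← div_eq_inv_mul, one_le_div ht]; exact hu.out.le)
    _ = gaussDensity t / t := by rw [integral_const_mul, hmoment, inv_mul_eq_div]

/-- `∫_t^∞ (u² - t²) φ(u) du` after an integration by parts. -/
noncomputable def gaussQSqrtPrimitive (t : ℝ) : ℝ := t * gaussDensity t + (1 - t ^ 2) * gaussQ t

lemma hasDerivAt_gaussQSqrtPrimitive (t : ℝ) :
    HasDerivAt gaussQSqrtPrimitive (-2 * t * gaussQ t) t := by
  have h := ((hasDerivAt_id t).mul (hasDerivAt_gaussDensity t)).add
    (((hasDerivAt_pow 2 t).const_sub 1).mul (hasDerivAt_gaussQ t))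
  exact h.congr_deriv (by simp only [id]; ring)

lemma tendsto_gaussQSqrtPrimitive_atTop : Tendsto gaussQSqrtPrimitive atTop (𝓝 0) := by
  have h := (tendsto_rpow_mul_gaussDensity_atTop 1).const_mul 2
  rw [mul_zero] at h
  refine squeeze_zero_norm' ?_ h
  filter_upwards [eventually_ge_atTop 1] with t ht
  have ht0 : 0 < t := one_pos.trans_le ht
  have hmills : (t ^ 2 - 1) * gaussQ t ≤ t * gaussDensity t :=
    calc (t ^ 2 - 1) * gaussQ t ≤ t ^ 2 * (gaussDensity t / t) := by
          gcongr
          · exact gaussQ_nonneg t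
          · linarith
          · exact gaussQ_le_gaussDensity_div ht0
      _ = t * gaussDensity t := by field_simp
  rw [Real.norm_eq_abs, abs_le, rpow_one]
  unfold gaussQSqrtPrimitive
  have hQ : 0 ≤ (t ^ 2 - 1) * gaussQ t := mul_nonneg (by nlinarith) (gaussQ_nonneg t)
  have hφ : 0 ≤ t * gaussDensity t := mul_nonneg ht0.le (gaussDensity_nonneg t)
  constructor <;> linarith

lemma integral_Ioi_gaussQ_sqrt {s : ℝ} (hs : 0 < s) :
    ∫ γ in Ioi s, gaussQ √γ = gaussQSqrtPrimitive √s := by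
  have hderiv : ∀ γ ∈ Ici s, HasDerivAt (fun γ => gaussQSqrtPrimitive √γ) (-gaussQ √γ) γ := by
    intro γ hγ
    have hγ0 : 0 < γ := hs.trans_le hγ
    have h := (hasDerivAt_gaussQSqrtPrimitive √γ).comp γ (hasDerivAt_sqrt hγ0.ne')
    refine h.congr_deriv ?_
    field_simp [(sqrt_pos.2 hγ0).ne']
  have hlim := tendsto_gaussQSqrtPrimitive_atTop.comp tendsto_sqrt_atTop
  have h := integral_Ioi_of_hasDerivAt_of_nonpos' hderiv
    (fun γ _ => neg_nonpos.2 (gaussQ_nonneg _)) hlim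
  rw [integral_neg, zero_sub] at h
  exact neg_injective h

lemma gaussDensity_div_le_gaussQSqrtPrimitive {t : ℝ} (ht : 1 ≤ t) :
    gaussDensity t / t ≤ gaussQSqrtPrimitive t := by
  have ht0 : t ≠ 0 := (one_pos.trans_le ht).ne'
  calc gaussDensity t / t = t * gaussDensity t + (1 - t ^ 2) * (gaussDensity t / t) := by
        field_simp
        ring
    _ ≤ t * gaussDensity t + (1 - t ^ 2) * gaussQ t := by
        gcongr t * gaussDensity t + ?_
        exact mul_le_mul_of_nonpos_left (gaussQ_le_gaussDensity_div (one_pos.trans_le ht))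
          (by nlinarith)

theorem integral_gaussQ_sqrt_ge (s : ℝ) (hs : 1 < s) :
    ∫ γ in Set.Ioi s, gaussQ (Real.sqrt γ) ≥ Real.exp (-s / 2) / Real.sqrt (2 * π * s) := by
  have hs0 : 0 < s := one_pos.trans hs
  have hclosed : exp (-s / 2) / √(2 * π * s) = gaussDensity √s / √s := by
    rw [gaussDensity, sq_sqrt hs0.le, sqrt_mul (by positivity)]
    field_simp
  rw [integral_Ioi_gaussQ_sqrt hs0, hclosed, ge_iff_le]
  exact gaussDensity_div_le_gaussQSqrtPrimitive (one_le_sqrt.2 hs.le)
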